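/- The number of Yamanouchi words of length n on the alphabet {1,2,3} equals the n-th Motzkin number m_n. -/

import Mathlib

/-!
Give a word on `{1,2,3}` an initial surplus `a` of 1's over 2's and `b` of 2's over 3's. Splitting
off the first letter, the number `Y n a b` of words of length `n` whose surpluses stay nonnegative
satisfies `Y (n+1) a b = Y n (a+1) b + Y n (a-1) (b+1) + Y n a (b-1)`, while the number `L n h`
of Motzkin paths from height `h` down to `0` satisfies `L (n+1) h = L n (h+1) + L n h + L n (h-1)`.
These recurrences are compatible with `Y n a b = ∑_{i ≤ a, j ≤ b} L n (i + j)`, which by induction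
on `n` holds for all `a, b`; at `a = b = 0` it reads `Y n 0 0 = L n 0 = m_n`.
-/

/-- Paths with steps (1,1),(1,-1),(1,0) encoded by their height increments,
starting at height `h`, staying weakly above the x-axis and ending at height 0. -/
noncomputable def latticeCount (len : ℕ) (h : ℕ) : ℕ :=
  Nat.card {l : List ℤ // l.length = len ∧ (∀ x ∈ l, x = 1 ∨ x = -1 ∨ x = 0) ∧
    (∀ m, 0 ≤ (h : ℤ) + (l.take m).sum) ∧ (h : ℤ) + l.sum = 0}

/-- The `n`-th Motzkin number, as the number of Motzkin paths of length `n`. -/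
noncomputable def motzkin (n : ℕ) : ℕ := latticeCount n 0

/-- A Yamanouchi word of length `n` on the alphabet `{1,…,k}`: in every prefix, the
number of occurrences of `i` is at least the number of occurrences of `i+1`. -/
def IsYamanouchi (k : ℕ) {n : ℕ} (w : Fin n → ℕ) : Prop :=
  (∀ j, 1 ≤ w j ∧ w j ≤ k) ∧
  ∀ (m i : ℕ), 1 ≤ i →
    (Finset.univ.filter fun j : Fin n => j.1 < m ∧ w j = i + 1).card ≤
    (Finset.univ.filter fun j : Fin n => j.1 < m ∧ w j = i).card

open Finset

section Injective2

variable {α β γ : Type*} [DecidableEq γ] {f : α → β → γ}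

theorem Function.Injective2.mem_image_iff (hf : Function.Injective2 f) {x y : α} {b : β}
    {s : Finset β} : f x b ∈ s.image (f y) ↔ x = y ∧ b ∈ s := by
  simp only [mem_image, hf.eq_iff]
  grind

theorem Function.Injective2.card_union_image [DecidableEq β] (hf : Function.Injective2 f)
    {x y z : α} (hxy : x ≠ y) (hxz : x ≠ z) (hyz : y ≠ z) (s t u : Finset β) :
    (s.image (f x) ∪ t.image (f y) ∪ u.image (f z)).card = s.card + t.card + u.card := by
  have disj : ∀ {x y : α}, x ≠ y → ∀ s t : Finset β, Disjoint (s.image (f x)) (t.image (f y)) :=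
    fun hxy s t => disjoint_left.2 fun _ hs ht => by
      obtain ⟨b, -, rfl⟩ := mem_image.1 hs
      exact hxy (hf.mem_image_iff.1 ht).1
  rw [card_union_of_disjoint (disjoint_union_left.2 ⟨disj hxz s u, disj hyz t u⟩),
    card_union_of_disjoint (disj hxy s t), card_image_of_injective _ (hf.right x),
    card_image_of_injective _ (hf.right y), card_image_of_injective _ (hf.right z)]

end Injective2

theorem List.cons_injective2 {α : Type*} : Function.Injective2 (@List.cons α) :=
  fun _ _ _ _ h => List.cons.inj h

def IsMotzkinFrom (h : ℤ) (l : List ℤ) : Prop :=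
  (∀ x ∈ l, x = 1 ∨ x = -1 ∨ x = 0) ∧ (∀ m, 0 ≤ h + (l.take m).sum) ∧ h + l.sum = 0

theorem isMotzkinFrom_nil {h : ℤ} : IsMotzkinFrom h [] ↔ h = 0 := by
  simpa [IsMotzkinFrom] using Eq.ge

theorem isMotzkinFrom_cons {h x : ℤ} {l : List ℤ} :
    IsMotzkinFrom h (x :: l) ↔ 0 ≤ h ∧ (x = 1 ∨ x = -1 ∨ x = 0) ∧ IsMotzkinFrom (h + x) l := by
  have prefixes : (∀ m, 0 ≤ h + ((x :: l).take m).sum) ↔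
      0 ≤ h ∧ ∀ m, 0 ≤ h + x + (l.take m).sum := by
    refine ⟨fun H => ⟨by simpa using H 0, fun m => by simpa [add_assoc] using H (m + 1)⟩, ?_⟩
    rintro ⟨h0, H⟩ (_ | m)
    · simpa using h0
    · simpa [add_assoc] using H m
  simp only [IsMotzkinFrom, List.forall_mem_cons, prefixes, List.sum_cons, add_assoc]
  tauto

def motzkinPaths : ℕ → ℤ → Finset (List ℤ)
  | 0, h => if h = 0 then {[]} else ∅
  | n + 1, h => if 0 ≤ h then
      (motzkinPaths n (h + 1)).image (List.cons 1) ∪ (motzkinPaths n h).image (List.cons 0) ∪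
        (motzkinPaths n (h - 1)).image (List.cons (-1))
    else ∅

theorem mem_motzkinPaths {n : ℕ} {h : ℤ} {l : List ℤ} :
    l ∈ motzkinPaths n h ↔ l.length = n ∧ IsMotzkinFrom h l := by
  induction n generalizing h l with
  | zero =>
    rw [motzkinPaths]
    split_ifs with h0 <;> cases l <;> simp [h0, isMotzkinFrom_nil]
  | succ n ih =>
    rw [motzkinPaths]
    split_ifs with h0
    · cases l with
      | nil => simp
      | cons x l =>
        simp only [mem_union, List.cons_injective2.mem_image_iff, ih, List.length_cons,
          Nat.add_right_cancel_iff, isMotzkinFrom_cons]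
        grind
    · cases l <;> simp [isMotzkinFrom_cons, h0]

theorem motzkinPaths_of_neg {n : ℕ} {h : ℤ} (h0 : h < 0) : motzkinPaths n h = ∅ := by
  cases n <;> simp [motzkinPaths, h0.ne, h0.not_ge]

theorem card_motzkinPaths_succ (n : ℕ) {h : ℤ} (h0 : 0 ≤ h) :
    (motzkinPaths (n + 1) h).card =
      (motzkinPaths n (h + 1)).card + (motzkinPaths n h).card + (motzkinPaths n (h - 1)).card := by
  rw [motzkinPaths, if_pos h0]
  exact List.cons_injective2.card_union_image (by norm_num) (by norm_num) (by norm_num) _ _ _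

theorem latticeCount_eq_card (n h : ℕ) : latticeCount n h = (motzkinPaths n h).card :=
  Nat.subtype_card _ fun _ => mem_motzkinPaths

section Yamanouchi

variable {n : ℕ}

def letterCount (w : Fin n → ℕ) (m v : ℕ) : ℕ :=
  (Finset.univ.filter fun j : Fin n => j.1 < m ∧ w j = v).card

theorem letterCount_zero (w : Fin n → ℕ) (v : ℕ) : letterCount w 0 v = 0 := by
  simp [letterCount]

theorem letterCount_cons_succ (x : ℕ) (u : Fin n → ℕ) (m v : ℕ) :
    letterCount (Fin.cons x u : Fin (n + 1) → ℕ) (m + 1) v =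
      (if x = v then 1 else 0) + letterCount u m v := by
  simp only [letterCount, card_filter, Fin.sum_univ_succ]
  simp [Fin.val_succ]

def IsYamanouchiFrom (a b : ℤ) (w : Fin n → ℕ) : Prop :=
  (∀ j, 1 ≤ w j ∧ w j ≤ 3) ∧
    ∀ m, (letterCount w m 2 : ℤ) ≤ a + letterCount w m 1 ∧
      (letterCount w m 3 : ℤ) ≤ b + letterCount w m 2

theorem isYamanouchi_three_iff (w : Fin n → ℕ) : IsYamanouchi 3 w ↔ IsYamanouchiFrom 0 0 w := by
  refine and_congr_right fun hw => ⟨fun H m => ?_, fun H m i hi => ?_⟩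
  · have h₁ := H m 1 le_rfl
    have h₂ := H m 2 one_le_two
    norm_num at h₁ h₂
    simp only [letterCount, zero_add, Nat.cast_le]
    exact ⟨h₁, h₂⟩
  · obtain rfl | rfl | hi : i = 1 ∨ i = 2 ∨ 3 ≤ i := by omega
    · simpa [letterCount] using (H m).1
    · simpa [letterCount] using (H m).2
    · have : ∀ j, w j ≠ i + 1 := fun j => by have := hw j; omega
      simp [this]

theorem isYamanouchiFrom_nil {a b : ℤ} (w : Fin 0 → ℕ) :
    IsYamanouchiFrom a b w ↔ 0 ≤ a ∧ 0 ≤ b := by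
  simp [IsYamanouchiFrom, letterCount]

theorem isYamanouchiFrom_cons {a b : ℤ} {x : ℕ} {u : Fin n → ℕ} :
    IsYamanouchiFrom a b (Fin.cons x u : Fin (n + 1) → ℕ) ↔ 0 ≤ a ∧ 0 ≤ b ∧ 1 ≤ x ∧ x ≤ 3 ∧
      IsYamanouchiFrom (a + (if x = 1 then 1 else 0) - (if x = 2 then 1 else 0))
        (b + (if x = 2 then 1 else 0) - (if x = 3 then 1 else 0)) u := by
  simp only [IsYamanouchiFrom, Fin.forall_fin_succ, Fin.cons_zero, Fin.cons_succ]
  conv_lhs => rw [← Nat.and_forall_add_one]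
  simp only [letterCount_zero, letterCount_cons_succ]
  push_cast
  constructor
  · rintro ⟨⟨hx, hu⟩, ⟨ha, hb⟩, H⟩
    refine ⟨by simpa using ha, by simpa using hb, hx.1, hx.2, hu, fun m => ?_⟩
    have := H m
    split_ifs at this ⊢ <;> omega
  · rintro ⟨ha, hb, hx₁, hx₃, hu, H⟩
    refine ⟨⟨⟨hx₁, hx₃⟩, hu⟩, ⟨by simpa using ha, by simpa using hb⟩, fun m => ?_⟩
    have := H m
    split_ifs at this ⊢ <;> omega

def yamanouchiWords : (n : ℕ) → ℤ → ℤ → Finset (Fin n → ℕ)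
  | 0, a, b => if 0 ≤ a ∧ 0 ≤ b then {Fin.elim0} else ∅
  | n + 1, a, b => if 0 ≤ a ∧ 0 ≤ b then
      (yamanouchiWords n (a + 1) b).image (Fin.cons 1) ∪
        (yamanouchiWords n (a - 1) (b + 1)).image (Fin.cons 2) ∪
        (yamanouchiWords n a (b - 1)).image (Fin.cons 3)
    else ∅

theorem mem_yamanouchiWords {a b : ℤ} {w : Fin n → ℕ} :
    w ∈ yamanouchiWords n a b ↔ IsYamanouchiFrom a b w := by
  induction n generalizing a b with
  | zero =>
    rw [yamanouchiWords, isYamanouchiFrom_nil]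
    split_ifs with hab <;> simp [hab, Subsingleton.elim w Fin.elim0]
  | succ n ih =>
    induction w using Fin.consCases with | cons x u => ?_
    rw [yamanouchiWords, isYamanouchiFrom_cons]
    by_cases hab : 0 ≤ a ∧ 0 ≤ b
    · simp only [if_pos hab, mem_union, Fin.cons_injective2.mem_image_iff, ih]
      grind
    · simp only [if_neg hab, notMem_empty, false_iff]
      tauto

theorem yamanouchiWords_eq_empty {a b : ℤ} (hab : ¬(0 ≤ a ∧ 0 ≤ b)) :
    yamanouchiWords n a b = ∅ := by
  cases n <;> simp [yamanouchiWords, hab]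

theorem card_yamanouchiWords_succ (n : ℕ) {a b : ℤ} (ha : 0 ≤ a) (hb : 0 ≤ b) :
    (yamanouchiWords (n + 1) a b).card = (yamanouchiWords n (a + 1) b).card +
      (yamanouchiWords n (a - 1) (b + 1)).card + (yamanouchiWords n a (b - 1)).card := by
  rw [yamanouchiWords, if_pos ⟨ha, hb⟩]
  exact Fin.cons_injective2.card_union_image (by norm_num) (by norm_num) (by norm_num) _ _ _

end Yamanouchi

def boxSum (f : ℕ → ℕ) (p q : ℕ) : ℕ := ∑ i ∈ range p, ∑ j ∈ range q, f (i + j)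

theorem boxSum_succ_left (f : ℕ → ℕ) (p q : ℕ) :
    boxSum f (p + 1) q = boxSum f p q + ∑ j ∈ range q, f (p + j) :=
  sum_range_succ _ _

theorem boxSum_succ_succ_of_recurrence {f g : ℕ → ℕ} (hg₀ : g 0 = f 1 + f 0)
    (hg : ∀ k, g (k + 1) = f (k + 2) + f (k + 1) + f k) (p q : ℕ) :
    boxSum g (p + 1) (q + 1) =
      boxSum f (p + 2) (q + 1) + boxSum f p (q + 2) + boxSum f (p + 1) q := by
  induction p with
  | zero =>
    have hg' : ∑ j ∈ range q, g (j + 1) =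
        ∑ j ∈ range q, f (1 + (j + 1)) + ∑ j ∈ range q, f (j + 1) + ∑ j ∈ range q, f j := by
      rw [← sum_add_distrib, ← sum_add_distrib]
      exact sum_congr rfl fun j _ => by rw [hg, add_comm 1 (j + 1)]
    simp only [boxSum, sum_range_succ _ 1, sum_range_one, sum_range_zero, zero_add]
    rw [sum_range_succ' g, sum_range_succ' f, sum_range_succ' (fun j => f (1 + j)), hg', hg₀]
    ring
  | succ p ih =>
    have col : ∑ j ∈ range (q + 1), g (p + 1 + j) = ∑ j ∈ range (q + 1), f (p + 2 + j) +
        ∑ j ∈ range (q + 1), f (p + 1 + j) + ∑ j ∈ range (q + 1), f (p + j) := by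
      rw [← sum_add_distrib, ← sum_add_distrib]
      exact sum_congr rfl fun j _ => by rw [add_right_comm, hg]; ring_nf
    have top : f (p + (q + 1)) = f (p + 1 + q) := by ring_nf
    show boxSum g (p + 1 + 1) (q + 1) =
      boxSum f (p + 2 + 1) (q + 1) + boxSum f (p + 1) (q + 2) + boxSum f (p + 1 + 1) q
    rw [boxSum_succ_left g, ih, boxSum_succ_left f (p + 2), boxSum_succ_left f p (q + 2),
      boxSum_succ_left f (p + 1) q, col, sum_range_succ (fun j => f (p + j)) (q + 1),
      sum_range_succ (fun j => f (p + 1 + j)) q, top]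
    ring

-- Stated for all `a b : ℤ` (both sides vanish when one is negative) so that the induction
-- hypothesis applies at `a - 1` and `b - 1`.
theorem card_yamanouchiWords (n : ℕ) (a b : ℤ) : (yamanouchiWords n a b).card =
    boxSum (fun k => (motzkinPaths n k).card) (a + 1).toNat (b + 1).toNat := by
  have outside : ∀ m (a b : ℤ), ¬(0 ≤ a ∧ 0 ≤ b) → (yamanouchiWords m a b).card =
      boxSum (fun k => (motzkinPaths m k).card) (a + 1).toNat (b + 1).toNat := by
    intro m a b hab
    obtain h | h : (a + 1).toNat = 0 ∨ (b + 1).toNat = 0 := by omega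
    all_goals simp [yamanouchiWords_eq_empty hab, boxSum, h]
  induction n generalizing a b with
  | zero =>
    by_cases hab : 0 ≤ a ∧ 0 ≤ b
    · lift a to ℕ using hab.1
      lift b to ℕ using hab.2
      rw [yamanouchiWords, if_pos hab, card_singleton, show ((a : ℤ) + 1).toNat = a + 1 by omega,
        show ((b : ℤ) + 1).toNat = b + 1 by omega]
      simp only [boxSum, motzkinPaths, Nat.cast_eq_zero, sum_range_succ']
      simp
    · exact outside 0 a b hab
  | succ n ih =>
    by_cases hab : 0 ≤ a ∧ 0 ≤ b
    · have hg₀ : (motzkinPaths (n + 1) 0).card =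
          (motzkinPaths n 1).card + (motzkinPaths n 0).card := by
        simp [card_motzkinPaths_succ, motzkinPaths_of_neg]
      have hg : ∀ k : ℕ, (motzkinPaths (n + 1) (k + 1 : ℕ)).card =
          (motzkinPaths n (k + 2 : ℕ)).card + (motzkinPaths n (k + 1 : ℕ)).card +
            (motzkinPaths n k).card := fun k => by
        rw [card_motzkinPaths_succ n (by positivity)]
        push_cast
        ring_nf
      lift a to ℕ using hab.1
      lift b to ℕ using hab.2
      rw [card_yamanouchiWords_succ n hab.1 hab.2, ih, ih, ih]
      convert (boxSum_succ_succ_of_recurrence (f := fun k => (motzkinPaths n k).card)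
        (g := fun k => (motzkinPaths (n + 1) k).card) hg₀ hg a b).symm using 4 <;> omega
    · exact outside (n + 1) a b hab

/-- Yamanouchi words of length `n` on `{1,2,3}` are counted by the Motzkin numbers. -/
theorem yamanouchi_card (n : ℕ) :
    Nat.card {w : Fin n → ℕ // IsYamanouchi 3 w} = motzkin n := by
  calc Nat.card {w : Fin n → ℕ // IsYamanouchi 3 w}
      = (yamanouchiWords n 0 0).card :=
        Nat.subtype_card _ fun w => by rw [mem_yamanouchiWords, isYamanouchi_three_iff]
    _ = (motzkinPaths n 0).card := by simp [card_yamanouchiWords, boxSum]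
    _ = motzkin n := (latticeCount_eq_card n 0).symm
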